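/- arXiv:2212.12149 — 8 statements merged into one kernel-verified Lean document; each statement's English description precedes it below -/
import Mathlib

section
/- Let X be a real Banach space and let x be a point of the unit sphere S_X. If x is a locally uniformly nonsquare point (i.e., there exists δ > 0 such that min{‖x + y‖, ‖x − y‖} ≤ 2 − δ for all y ∈ S_X), then x is not a Δ-point of X (i.e., there exists ε > 0 such that x does not lie in the closed convex hull of Δ_ε(x)). -/
/-- In a real Banach space, a locally uniformly nonsquare point
`x` of the unit sphere is not a Δ-point: there is `ε > 0` such that `x` is not
in the closed convex hull of `Δ_ε(x) = {y ∈ B_X : ‖x - y‖ ≥ 2 - ε}`. -/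
theorem lunsq_point_not_delta_point
    {X : Type*} [NormedAddCommGroup X] [NormedSpace ℝ X] [CompleteSpace X]
    (x : X) (hx : ‖x‖ = 1)
    (hlunsq : ∃ δ > 0, ∀ y : X, ‖y‖ = 1 → min ‖x + y‖ ‖x - y‖ ≤ 2 - δ) :
    ∃ ε > 0, x ∉ closure (convexHull ℝ {y : X | ‖y‖ ≤ 1 ∧ 2 - ε ≤ ‖x - y‖}) := by
  obtain ⟨δ₀, hδ₀, hmin₀⟩ := hlunsq
  set δ : ℝ := min δ₀ 1 with hδdef
  have hδ : 0 < δ := lt_min hδ₀ one_pos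
  have hδ1 : δ ≤ 1 := min_le_right _ _
  have hmin : ∀ y : X, ‖y‖ = 1 → min ‖x + y‖ ‖x - y‖ ≤ 2 - δ := by
    intro y hy
    have := hmin₀ y hy
    have : min ‖x + y‖ ‖x - y‖ ≤ 2 - δ₀ := this
    have hδle : δ ≤ δ₀ := min_le_left _ _
    linarith
  refine ⟨δ / 4, by positivity, ?_⟩
  intro hmem
  have hsub : {y : X | ‖y‖ ≤ 1 ∧ 2 - δ / 4 ≤ ‖x - y‖} ⊆
      Metric.closedBall (-x) (2 - 3 * δ / 4) := by
    rintro y ⟨hy1, hy2⟩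
    have htri : ‖x - y‖ ≤ ‖x‖ + ‖y‖ := norm_sub_le x y
    have hylb : 1 - δ / 4 ≤ ‖y‖ := by linarith
    have hypos : (0:ℝ) < ‖y‖ := by linarith
    set z : X := ‖y‖⁻¹ • y with hzdef
    have hz : ‖z‖ = 1 := by
      rw [hzdef, norm_smul, norm_inv, norm_norm, inv_mul_cancel₀ hypos.ne']
    have hyz : ‖y - z‖ ≤ δ / 4 := by
      have h1 : y - z = (1 - ‖y‖⁻¹) • y := by
        rw [hzdef, sub_smul, one_smul]
      rw [h1, norm_smul, Real.norm_eq_abs]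
      have h2 : |1 - ‖y‖⁻¹| = (‖y‖⁻¹ - 1) := by
        rw [abs_of_nonpos]
        · ring
        · have : (1:ℝ) ≤ ‖y‖⁻¹ := (one_le_inv₀ hypos).mpr hy1
          linarith
      rw [h2]
      have : (‖y‖⁻¹ - 1) * ‖y‖ = 1 - ‖y‖ := by
        field_simp
      rw [this]
      linarith
    have hxz : 2 - δ / 2 ≤ ‖x - z‖ := by
      have h1 : ‖x - y‖ ≤ ‖x - z‖ + ‖z - y‖ := norm_sub_le_norm_sub_add_norm_sub x z y
      have h2 : ‖z - y‖ = ‖y - z‖ := norm_sub_rev z y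
      linarith
    have hmz := hmin z hz
    have hxz2 : ‖x + z‖ ≤ 2 - δ := by
      rcases min_le_iff.mp hmz with h | h
      · exact h
      · linarith
    have hxysum : ‖x + y‖ ≤ 2 - 3 * δ / 4 := by
      have h1 : ‖x + y‖ ≤ ‖x + z‖ + ‖y - z‖ := by
        have : x + y = (x + z) + (y - z) := by abel
        rw [this]
        exact norm_add_le _ _
      linarith
    rw [Metric.mem_closedBall, dist_eq_norm, sub_neg_eq_add]
    rw [show y + x = x + y by abel]
    exact hxysum
  have h2 : convexHull ℝ {y : X | ‖y‖ ≤ 1 ∧ 2 - δ / 4 ≤ ‖x - y‖} ⊆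
      Metric.closedBall (-x) (2 - 3 * δ / 4) :=
    convexHull_min hsub (convex_closedBall _ _)
  have h3 := closure_minimal h2 Metric.isClosed_closedBall hmem
  rw [Metric.mem_closedBall, dist_eq_norm, sub_neg_eq_add] at h3
  have h4 : ‖x + x‖ = 2 := by
    rw [← two_smul ℝ x, norm_smul, hx]
    norm_num
  rw [h4] at h3
  linarith
end

section
/- Let X be a real Banach space in which every point of the unit sphere S_X is a locally uniformly nonsquare point (X is locally uniformly nonsquare). Then X has no Δ-points: for every x ∈ S_X there exists ε > 0 such that x does not lie in the closed convex hull of Δ_ε(x). -/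
/-! A norming functional `f` for `x` separates `x` from `Δ_ε(x)` once `ε` is small: if some
`y ∈ Δ_ε(x)` had `f y > 1 - ε`, then also `‖x + y‖ > 2 - ε`, so `‖y‖ > 1 - ε`, and the
normalisation `u = y / ‖y‖` would satisfy `min ‖x + u‖ ‖x - u‖ > 2 - 2ε`, contradicting local uniform
nonsquareness at `x` for `2ε ≤ δ`. The half-space `{f ≤ 1 - ε}` is closed and convex, so it
also contains the closed convex hull of `Δ_ε(x)`, but not `x`. -/

section

variable {X : Type*} [NormedAddCommGroup X] [NormedSpace ℝ X]

theorem norm_inv_norm_smul_sub_self {y : X} (hy : y ≠ 0) :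
    ‖‖y‖⁻¹ • y - y‖ = |1 - ‖y‖| := by
  have hy' : ‖y‖ ≠ 0 := norm_ne_zero_iff.mpr hy
  calc ‖‖y‖⁻¹ • y - y‖ = ‖(‖y‖⁻¹ - 1) • y‖ := by rw [sub_smul, one_smul]
    _ = |(‖y‖⁻¹ - 1) * ‖y‖| := by rw [norm_smul, Real.norm_eq_abs, abs_mul, abs_norm]
    _ = |1 - ‖y‖| := by rw [sub_mul, inv_mul_cancel₀ hy', one_mul, abs_sub_comm]

theorem exists_norm_eq_one_lt_min_norm_add_norm_sub {x y : X} {ε : ℝ} (hx : ‖x‖ ≤ 1)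
    (hε : ε ≤ 1) (hy : ‖y‖ ≤ 1) (hadd : 2 - ε < ‖x + y‖) (hsub : 2 - ε ≤ ‖x - y‖) :
    ∃ u : X, ‖u‖ = 1 ∧ 2 - 2 * ε < min ‖x + u‖ ‖x - u‖ := by
  have hy_large : 1 - ε < ‖y‖ := by linarith [norm_add_le x y]
  have hy0 : y ≠ 0 := norm_pos_iff.mp (by linarith)
  set u := ‖y‖⁻¹ • y
  have hu : ‖u - y‖ < ε := by
    rw [norm_inv_norm_smul_sub_self hy0, abs_of_nonneg (by linarith)]
    linarith
  refine ⟨u, norm_smul_inv_norm hy0, lt_min ?_ ?_⟩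
  · calc 2 - 2 * ε < ‖x + y‖ - ‖u - y‖ := by linarith
      _ ≤ ‖x + u‖ := by
        have h := norm_sub_le (x + u) (u - y)
        rw [show x + u - (u - y) = x + y by abel] at h
        linarith
  · calc 2 - 2 * ε < ‖x - y‖ - ‖u - y‖ := by linarith
      _ ≤ ‖x - u‖ := by
        have h := norm_add_le (x - u) (u - y)
        rw [show x - u + (u - y) = x - y by abel] at h
        linarith

theorem closure_convexHull_subset_setOf_le {s : Set X} (f : StrongDual ℝ X) {c : ℝ}
    (hs : s ⊆ {z | f z ≤ c}) : closure (convexHull ℝ s) ⊆ {z | f z ≤ c} :=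
  closure_minimal (convexHull_min hs (convex_halfSpace_le f.isLinear c))
    (isClosed_le f.continuous continuous_const)

end

theorem lunsq_space_no_delta_points_general
    {X : Type*} [NormedAddCommGroup X] [NormedSpace ℝ X]
    (hlunsq : ∀ x : X, ‖x‖ = 1 →
      ∃ δ > 0, ∀ y : X, ‖y‖ = 1 → min ‖x + y‖ ‖x - y‖ ≤ 2 - δ) :
    ∀ x : X, ‖x‖ = 1 →
      ∃ ε > 0, x ∉ closure (convexHull ℝ {y : X | ‖y‖ ≤ 1 ∧ 2 - ε ≤ ‖x - y‖}) := by
  intro x hx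
  obtain ⟨δ, hδ0, hδ⟩ := hlunsq x hx
  have hδ2 : δ ≤ 2 := by simpa [hx] using hδ x hx
  obtain ⟨f, hf, hfx⟩ := exists_dual_vector'' ℝ x
  replace hfx : f x = 1 := by simpa [hx] using hfx
  have hf_le (z : X) : f z ≤ ‖z‖ :=
    (Real.le_norm_self _).trans ((f.le_opNorm z).trans (mul_le_of_le_one_left (norm_nonneg z) hf))
  refine ⟨δ / 2, by positivity, fun hmem => ?_⟩
  have hΔ : {y : X | ‖y‖ ≤ 1 ∧ 2 - δ / 2 ≤ ‖x - y‖} ⊆ {z | f z ≤ 1 - δ / 2} := by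
    rintro y ⟨hy, hxy⟩
    show f y ≤ 1 - δ / 2
    by_contra! hfy
    have hadd : 2 - δ / 2 < ‖x + y‖ := by
      linarith [hf_le (x + y), map_add f x y]
    obtain ⟨u, hu, hmin⟩ :=
      exists_norm_eq_one_lt_min_norm_add_norm_sub hx.le (by linarith) hy hadd hxy
    linarith [hδ u hu]
  have hfx_le : f x ≤ 1 - δ / 2 := closure_convexHull_subset_setOf_le f hΔ hmem
  linarith

/-- A locally uniformly nonsquare real Banach space has no
Δ-points. -/
theorem lunsq_space_no_delta_points
    {X : Type*} [NormedAddCommGroup X] [NormedSpace ℝ X] [CompleteSpace X]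
    (hlunsq : ∀ x : X, ‖x‖ = 1 →
      ∃ δ > 0, ∀ y : X, ‖y‖ = 1 → min ‖x + y‖ ‖x - y‖ ≤ 2 - δ) :
    ∀ x : X, ‖x‖ = 1 →
      ∃ ε > 0, x ∉ closure (convexHull ℝ {y : X | ‖y‖ ≤ 1 ∧ 2 - ε ≤ ‖x - y‖}) :=
  lunsq_space_no_delta_points_general hlunsq
end

section
/- Let X be a nontrivial real Banach space with the diametral local diameter two property, i.e., every point of the unit sphere S_X is a Δ-point. Then the norm of X is locally octahedral: for every x ∈ X and every ε > 0 there exists y ∈ S_X such that ‖s x + y‖ ≥ (1 − ε)(|s|·‖x‖ + ‖y‖) for all real numbers s. -/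
private lemma oct_key {X : Type*} [NormedAddCommGroup X] [NormedSpace ℝ X]
    (η : ℝ) (hη : 0 ≤ η) (u v : X) (hu : ‖u‖ = 1) (hv : ‖v‖ = 1)
    (h : 2 - η ≤ ‖u + v‖) (t : ℝ) (ht : 0 ≤ t) :
    (1 - η) * (t + 1) ≤ ‖t • u + v‖ := by
  rcases le_or_gt t 1 with hle | hgt
  · have heq : t • u + v = (u + v) - (1 - t) • u := by module
    have h1 : ‖u + v‖ - ‖(1 - t) • u‖ ≤ ‖t • u + v‖ := by
      rw [heq]; exact norm_sub_norm_le _ _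
    rw [norm_smul, hu, Real.norm_eq_abs, abs_of_nonneg (by linarith)] at h1
    nlinarith
  · have heq : t • u + v = t • (u + v) - (t - 1) • v := by module
    have h1 : ‖t • (u + v)‖ - ‖(t - 1) • v‖ ≤ ‖t • u + v‖ := by
      rw [heq]; exact norm_sub_norm_le _ _
    rw [norm_smul, norm_smul, hv, Real.norm_eq_abs, Real.norm_eq_abs,
      abs_of_nonneg ht, abs_of_nonneg (by linarith)] at h1
    nlinarith [norm_nonneg (u + v), mul_le_mul_of_nonneg_left h (le_of_lt (lt_trans one_pos hgt))]

/-- A nontrivial real Banach space with the diametral local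
diameter two property (every unit-sphere point is a Δ-point) is locally
octahedral. -/
theorem dld2p_implies_locally_octahedral
    {X : Type*} [NormedAddCommGroup X] [NormedSpace ℝ X] [CompleteSpace X]
    [Nontrivial X]
    (hDLD2P : ∀ x : X, ‖x‖ = 1 → ∀ ε > 0,
      x ∈ closure (convexHull ℝ {y : X | ‖y‖ ≤ 1 ∧ 2 - ε ≤ ‖x - y‖})) :
    ∀ x : X, ∀ ε > 0, ∃ y : X, ‖y‖ = 1 ∧
      ∀ s : ℝ, (1 - ε) * (|s| * ‖x‖ + ‖y‖) ≤ ‖s • x + y‖ := by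
  intro x ε hε
  obtain ⟨z, hz⟩ : ∃ z : X, z ≠ 0 := exists_ne 0
  have hy₀ : ‖(‖z‖⁻¹ • z : X)‖ = 1 := norm_smul_inv_norm hz
  by_cases hε1 : 1 ≤ ε
  · refine ⟨‖z‖⁻¹ • z, hy₀, fun s => ?_⟩
    have h2 : (0:ℝ) ≤ |s| * ‖x‖ + ‖(‖z‖⁻¹ • z : X)‖ := by positivity
    calc (1 - ε) * (|s| * ‖x‖ + ‖(‖z‖⁻¹ • z : X)‖) ≤ 0 :=
          mul_nonpos_of_nonpos_of_nonneg (by linarith) h2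
      _ ≤ _ := norm_nonneg _
  push_neg at hε1
  by_cases hx : x = 0
  · refine ⟨‖z‖⁻¹ • z, hy₀, fun s => ?_⟩
    rw [hx, smul_zero, zero_add, hy₀, norm_zero]
    nlinarith [abs_nonneg s]
  -- main case
  have hxn : ‖x‖ ≠ 0 := norm_ne_zero_iff.mpr hx
  set δ : ℝ := ε / 2 with hδ
  have hδ0 : 0 < δ := by positivity
  set u : X := ‖x‖⁻¹ • x with hu_def
  have hu : ‖u‖ = 1 := norm_smul_inv_norm hx
  have hcl := hDLD2P u hu δ hδ0
  set S : Set X := {y : X | ‖y‖ ≤ 1 ∧ 2 - δ ≤ ‖u - y‖} with hS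
  have hex : ∃ y, (‖y‖ ≤ 1 ∧ 2 - δ ≤ ‖u - y‖) ∧ 2 - δ < ‖u + y‖ := by
    by_contra hcon
    push_neg at hcon
    have hsub : convexHull ℝ S ⊆ Metric.closedBall (-u) (2 - δ) := by
      apply convexHull_min _ (convex_closedBall _ _)
      intro y hy
      have := hcon y hy
      simp only [Metric.mem_closedBall, dist_eq_norm, sub_neg_eq_add]
      rwa [add_comm]
    obtain ⟨w, hwS, hwd⟩ := Metric.mem_closure_iff.mp hcl δ hδ0
    have hw := hsub hwS
    rw [Metric.mem_closedBall, dist_eq_norm, sub_neg_eq_add] at hw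
    have hge : 2 - ‖u - w‖ ≤ ‖w + u‖ := by
      have huu : ‖u + u‖ = 2 := by
        rw [← two_smul ℝ u, norm_smul, hu]; norm_num
      have heq2 : (u + u) - (u - w) = w + u := by abel
      calc 2 - ‖u - w‖ = ‖u + u‖ - ‖u - w‖ := by rw [huu]
        _ ≤ ‖(u + u) - (u - w)‖ := norm_sub_norm_le _ _
        _ = ‖w + u‖ := by rw [heq2]
    rw [dist_eq_norm] at hwd
    linarith
  obtain ⟨y, ⟨hy1, hy2⟩, hy3⟩ := hex
  have hδ1 : δ < 1 := by rw [hδ]; linarith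
  have hyn : 1 - δ < ‖y‖ := by
    have := norm_add_le u y
    rw [hu] at this
    linarith
  have hy0 : (0:ℝ) < ‖y‖ := by linarith
  have hyne : y ≠ 0 := norm_pos_iff.mp hy0
  set w : X := ‖y‖⁻¹ • y with hw_def
  have hw1 : ‖w‖ = 1 := norm_smul_inv_norm hyne
  have hyw : ‖y - w‖ < δ := by
    have heq : y - w = (1 - ‖y‖⁻¹) • y := by
      rw [hw_def, sub_smul, one_smul]
    have hcalc : (1 - ‖y‖⁻¹) * ‖y‖ = ‖y‖ - 1 := by
      field_simp
    rw [heq, norm_smul, Real.norm_eq_abs, ← abs_of_nonneg hy0.le, ← abs_mul,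
      abs_of_nonneg hy0.le, hcalc, abs_of_nonpos (by linarith)]
    linarith
  have hplus : 2 - ε ≤ ‖u + w‖ := by
    have heq : u + w = (u + y) - (y - w) := by abel
    have := norm_sub_norm_le (u + y) (y - w)
    rw [← heq] at this
    have h2δ : 2 - ε = 2 - δ - δ := by rw [hδ]; ring
    linarith
  have hminus : 2 - ε ≤ ‖u - w‖ := by
    have heq : u - w = (u - y) + (y - w) := by abel
    have h1 : ‖u - y‖ - ‖-(y - w)‖ ≤ ‖(u - y) - -(y - w)‖ := norm_sub_norm_le _ _
    rw [sub_neg_eq_add, ← heq, norm_neg] at h1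
    have h2δ : 2 - ε = 2 - δ - δ := by rw [hδ]; ring
    linarith
  refine ⟨w, hw1, fun s => ?_⟩
  rcases le_or_gt 0 s with hs | hs
  · have hsx : s • x = (s * ‖x‖) • u := by
      rw [hu_def, smul_smul, mul_assoc, mul_inv_cancel₀ hxn, mul_one]
    have := oct_key ε hε.le u w hu hw1 hplus (s * ‖x‖)
      (mul_nonneg hs (norm_nonneg x))
    rw [hw1, abs_of_nonneg hs, hsx]
    linarith
  · have hnw1 : ‖-w‖ = 1 := by rw [norm_neg, hw1]
    have hnplus : 2 - ε ≤ ‖u + -w‖ := by rwa [← sub_eq_add_neg]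
    have := oct_key ε hε.le u (-w) hu hnw1 hnplus ((-s) * ‖x‖)
      (mul_nonneg (by linarith) (norm_nonneg x))
    have hsx : ((-s) * ‖x‖) • u + -w = -(s • x + w) := by
      have h1 : ((-s) * ‖x‖) • u = -(s • x) := by
        rw [hu_def, smul_smul, mul_assoc, mul_inv_cancel₀ hxn, mul_one, neg_smul]
      rw [h1]; abel
    rw [hsx, norm_neg] at this
    rw [hw1, abs_of_neg hs]
    linarith
end

section
/- Let X be a real Banach space and let x ∈ S_X be a Δ-point. Then for every ε > 0, every α ∈ (0,1) with α/(1 − α) < ε, and every x* ∈ S_{X*} such that x ∈ S(x*, α), there exist z* ∈ S_{X*} and α₁ > 0 such that the slice S(z*, α₁) is contained in S(x*, α) and ‖x − y‖ > 2 − ε for all y ∈ S(z*, α₁). -/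
/-!
Pick `y ∈ Δ_δ(x)` with `x*(y)` almost `x*(x)` (a functional that is large at a point of the
closed convex hull of a set is large somewhere on the set), and let `h` norm `x - y`. Then
`h(x) ≈ 1` and `h(y) ≈ -1`, so `‖x* - h‖ ≈ 1 + x*(x)` is almost attained at `y`. On a thin slice
of the normalisation `z*` of `x* - h`, both `x*(z)` and `-h(z)` are therefore close to `x*(x)`:
the first puts the slice inside `S(x*, α)`, the second gives `‖x - z‖ ≥ h(x - z) ≈ 1 + x*(x)`,
which exceeds `2 - α ≥ 2 - ε`.
-/

theorem exists_lt_apply_of_mem_closure_convexHull {E : Type*} [AddCommGroup E] [Module ℝ E]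
    [TopologicalSpace E] (f : E →L[ℝ] ℝ) {s : Set E} {x : E}
    (hx : x ∈ closure (convexHull ℝ s)) {t : ℝ} (ht : t < f x) : ∃ y ∈ s, t < f y := by
  by_contra! hs
  have hsub : closure (convexHull ℝ s) ⊆ f ⁻¹' Set.Iic t :=
    closure_minimal (convexHull_min hs ((convex_Iic t).linear_preimage f.toLinearMap))
      (isClosed_Iic.preimage f.continuous)
  exact (hsub hx).not_gt ht

section NormedSpace

variable {X : Type*} [NormedAddCommGroup X] [NormedSpace ℝ X]

theorem abs_apply_le_of_opNorm_le {φ : StrongDual ℝ X} {c : ℝ} (hφ : ‖φ‖ ≤ c) (hc : 0 ≤ c)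
    {z : X} (hz : ‖z‖ ≤ 1) : |φ z| ≤ c :=
  (φ.le_of_opNorm_le hφ z).trans (mul_le_of_le_one_right hc hz)

theorem sub_mul_lt_apply_of_lt_inv_norm_smul_apply {φ : StrongDual ℝ X} {c γ : ℝ}
    (hφ₀ : 0 < ‖φ‖) (hφ : ‖φ‖ ≤ c) (hγ : 0 ≤ γ) {z : X} (hz : 1 - γ < (‖φ‖⁻¹ • φ) z) :
    ‖φ‖ - c * γ < φ z := by
  have hz' : ‖φ‖ * (1 - γ) < φ z := by
    rw [smul_apply, smul_eq_mul] at hz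
    simpa [← mul_assoc, mul_inv_cancel₀ hφ₀.ne'] using mul_lt_mul_of_pos_left hz hφ₀
  nlinarith

theorem lt_norm_sub_of_le_apply_sub {f h : StrongDual ℝ X} (hh : ‖h‖ ≤ 1) {x y : X}
    (hx : ‖x‖ ≤ 1) (hy : ‖y‖ ≤ 1) {t δ : ℝ} (hfy : t < f y) (hxy : 2 - δ ≤ h (x - y)) :
    t + 1 - δ < ‖f - h‖ := by
  have hhx := (abs_le.mp (abs_apply_le_of_opNorm_le hh zero_le_one hx)).2
  have hfhy := (abs_le.mp (abs_apply_le_of_opNorm_le le_rfl (norm_nonneg (f - h)) hy)).2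
  rw [map_sub] at hxy
  rw [sub_apply] at hfhy
  linarith

theorem lt_apply_and_lt_norm_sub_of_lt_inv_norm_smul_sub_apply {f h : StrongDual ℝ X}
    (hf : ‖f‖ ≤ 1) (hh : ‖h‖ ≤ 1) {x y z : X} (hx : ‖x‖ ≤ 1) (hy : ‖y‖ ≤ 1) (hz : ‖z‖ ≤ 1)
    {t δ γ : ℝ} (hγ : 0 ≤ γ) (hfy : t < f y) (hxy : 2 - δ ≤ h (x - y))
    (hfh : 0 < ‖f - h‖) (hgz : 1 - γ < (‖f - h‖⁻¹ • (f - h)) z) :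
    t - δ - 2 * γ < f z ∧ 1 + t - 2 * δ - 2 * γ < ‖x - z‖ := by
  have hr := lt_norm_sub_of_le_apply_sub hh hx hy hfy hxy
  have hfhz := sub_mul_lt_apply_of_lt_inv_norm_smul_apply hfh
    ((norm_sub_le f h).trans (add_le_add hf hh)) hγ hgz
  have hfz := (abs_le.mp (abs_apply_le_of_opNorm_le hf zero_le_one hz)).2
  have hhz := (abs_le.mp (abs_apply_le_of_opNorm_le hh zero_le_one hz)).1
  have hhy := (abs_le.mp (abs_apply_le_of_opNorm_le hh zero_le_one hy)).1
  have hhxz : h (x - z) ≤ ‖x - z‖ := by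
    have := h.le_of_opNorm_le hh (x - z)
    rw [Real.norm_eq_abs, one_mul] at this
    exact (le_abs_self _).trans this
  rw [map_sub] at hxy hhxz
  rw [sub_apply] at hfhz
  constructor <;> linarith

end NormedSpace

theorem delta_point_slice_lemma_general
    {X : Type*} [NormedAddCommGroup X] [NormedSpace ℝ X]
    (x : X) (hx : ‖x‖ = 1)
    (hdelta : ∀ ε > 0,
      x ∈ closure (convexHull ℝ {y : X | ‖y‖ ≤ 1 ∧ 2 - ε ≤ ‖x - y‖})) :
    ∀ ε > 0, ∀ α : ℝ, 0 < α → α < 1 → α / (1 - α) < ε →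
      ∀ f : StrongDual ℝ X, ‖f‖ = 1 → f x > 1 - α →
        ∃ g : StrongDual ℝ X, ‖g‖ = 1 ∧ ∃ α₁ > 0,
          ({y : X | ‖y‖ ≤ 1 ∧ g y > 1 - α₁} ⊆ {y : X | ‖y‖ ≤ 1 ∧ f y > 1 - α}) ∧
          ∀ y : X, ‖y‖ ≤ 1 → g y > 1 - α₁ → ‖x - y‖ > 2 - ε := by
  intro ε hε α _ hα1 hαε f hf hfx
  have hαε' : α < ε := by
    have := (div_lt_iff₀ (sub_pos.mpr hα1)).mp hαε
    nlinarith
  -- the slice estimates lose `4δ` in `f z` and `5δ` in `‖x - z‖`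
  set δ := (f x - (1 - α)) / 5 with hδ
  have hδ0 : 0 < δ := by linarith
  obtain ⟨y, ⟨hy, hxy⟩, hfy⟩ :=
    exists_lt_apply_of_mem_closure_convexHull f (hdelta δ hδ0) (sub_lt_self (f x) hδ0)
  obtain ⟨h, hh, hhxy⟩ := exists_dual_vector'' ℝ (x - y)
  replace hhxy : 2 - δ ≤ h (x - y) := by rw [hhxy]; exact hxy
  have hfh : 0 < ‖f - h‖ := by
    have := lt_norm_sub_of_le_apply_sub hh hx.le hy hfy hhxy
    linarith
  have hslice {z : X} (hz : ‖z‖ ≤ 1) (hgz : 1 - δ < (‖f - h‖⁻¹ • (f - h)) z) :=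
    lt_apply_and_lt_norm_sub_of_lt_inv_norm_smul_sub_apply hf.le hh hx.le hy hz hδ0.le hfy hhxy
      hfh hgz
  refine ⟨‖f - h‖⁻¹ • (f - h), norm_smul_inv_norm (norm_pos_iff.mp hfh), δ, hδ0, ?_, ?_⟩
  · rintro z ⟨hz, hgz⟩
    exact ⟨hz, by linarith [(hslice hz hgz).1]⟩
  · intro z hz hgz
    linarith [(hslice hz hgz).2]

/-- If `x ∈ S_X` is a Δ-point, then for every `ε > 0`, every
`α ∈ (0,1)` with `α/(1-α) < ε` and every slice `S(x*, α)` containing `x`,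
there is a slice `S(z*, α₁) ⊆ S(x*, α)` with `‖x - y‖ > 2 - ε` for all
`y ∈ S(z*, α₁)`. -/
theorem delta_point_slice_lemma
    {X : Type*} [NormedAddCommGroup X] [NormedSpace ℝ X] [CompleteSpace X]
    (x : X) (hx : ‖x‖ = 1)
    (hdelta : ∀ ε > 0,
      x ∈ closure (convexHull ℝ {y : X | ‖y‖ ≤ 1 ∧ 2 - ε ≤ ‖x - y‖})) :
    ∀ ε > 0, ∀ α : ℝ, 0 < α → α < 1 → α / (1 - α) < ε →
      ∀ f : StrongDual ℝ X, ‖f‖ = 1 → f x > 1 - α →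
        ∃ g : StrongDual ℝ X, ‖g‖ = 1 ∧ ∃ α₁ > 0,
          ({y : X | ‖y‖ ≤ 1 ∧ g y > 1 - α₁} ⊆ {y : X | ‖y‖ ≤ 1 ∧ f y > 1 - α}) ∧
          ∀ y : X, ‖y‖ ≤ 1 → g y > 1 - α₁ → ‖x - y‖ > 2 - ε :=
  delta_point_slice_lemma_general x hx hdelta
end

section
/- Let X be a real Banach space and Y a closed linear subspace of X. The following statements are equivalent: (i) Y is an M-ideal in X, i.e., there exists a bounded linear projection P : X* → X* whose range is the annihilator Y^⊥ = {F ∈ X* : F(y) = 0 for all y ∈ Y} and such that ‖F‖ = ‖P(F)‖ + ‖F − P(F)‖ for all F ∈ X*; (ii) Y has the 3-ball property: for all y₁, y₂, y₃ in the unit ball B_Y of Y, all x in the unit ball B_X of X, and all ε > 0, there exists y ∈ Y such that ‖x + yᵢ − y‖ ≤ 1 + ε for i = 1, 2, 3. -/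
/-!
For `(ii) ⇒ (i)`: testing the 3-ball property on vectors almost norming `G₁ + G₂ + G₃` and the
restrictions `Gᵢ|_Y` gives `‖G₁ + G₂ + G₃‖ + ∑ ‖Gᵢ|_Y‖ ≤ ∑ ‖Gᵢ‖` whenever `G₁ + G₂ + G₃ ∈ Y^⊥`.
This makes norm-preserving Hahn–Banach extensions `E` unique and additive, so `F ↦ F - E (F|_Y)`
is a linear projection onto `Y^⊥`, and the same inequality gives the L-equation.

For `(i) ⇒ (ii)`, in fact the `n`-ball property for every `n`: if no `y` works, a functional
separating `(x + yᵢ)ᵢ` from the diagonal copy of `Y` in the sup-normed space `X^n` splits into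
`Gᵢ` with `∑ Gᵢ ∈ Y^⊥` and `∑ Gᵢ (x + yᵢ) > ∑ ‖Gᵢ‖`; writing `Gᵢ = P Gᵢ + (Gᵢ - P Gᵢ)`, where
`P Gᵢ` kills `yᵢ` and the `Gᵢ - P Gᵢ` sum to zero, shows that this is impossible.
-/

open Metric ContinuousLinearMap

theorem le_of_forall_pos_le_add_mul {a b c : ℝ} (h : ∀ ε > 0, a ≤ b + ε * c) : a ≤ b := by
  refine le_of_forall_pos_le_add fun δ hδ => ?_
  have hε : 0 < δ / (|c| + 1) := by positivity
  have hεc : δ / (|c| + 1) * c ≤ δ := by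
    calc δ / (|c| + 1) * c ≤ δ / (|c| + 1) * (|c| + 1) := by gcongr; linarith [le_abs_self c]
      _ = δ := div_mul_cancel₀ _ (by positivity)
  linarith [h _ hε]

section Functional

variable {E : Type*} [NormedAddCommGroup E] [NormedSpace ℝ E]

theorem ContinuousLinearMap.exists_norm_lt_one_lt_apply (f : StrongDual ℝ E) {r : ℝ}
    (hr : r < ‖f‖) : ∃ x, ‖x‖ < 1 ∧ r < f x := by
  obtain ⟨x, hx, hrx⟩ := f.exists_lt_apply_of_lt_opNorm hr
  rcases le_total 0 (f x) with h | h
  · exact ⟨x, hx, by rwa [Real.norm_of_nonneg h] at hrx⟩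
  · exact ⟨-x, by rwa [norm_neg], by rwa [Real.norm_of_nonpos h, ← map_neg] at hrx⟩

theorem ContinuousLinearMap.apply_le_of_norm_le (f : StrongDual ℝ E) {x : E} {c : ℝ}
    (h : ‖x‖ ≤ c) : f x ≤ ‖f‖ * c :=
  (Real.le_norm_self _).trans (f.le_opNorm_of_le h)

theorem Submodule.exists_dual_eq_infDist (M : Submodule ℝ E) (p : E) :
    ∃ f : StrongDual ℝ E, ‖f‖ ≤ 1 ∧ (∀ m ∈ M, f m = 0) ∧ f p = infDist p M := by
  obtain ⟨g, hg, hgp⟩ := exists_dual_vector'' ℝ (M.mkQ p)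
  have hmkQ : ‖M.mkQL‖ ≤ 1 :=
    opNorm_le_bound _ zero_le_one fun x => by simpa using Submodule.Quotient.norm_mk_le M x
  refine ⟨g.comp M.mkQL, ?_, fun m hm => ?_, ?_⟩
  · simpa using (opNorm_comp_le g M.mkQL).trans (mul_le_one₀ hg (norm_nonneg _) hmkQ)
  · simp [(Submodule.Quotient.mk_eq_zero M).2 hm]
  · exact hgp.trans (QuotientAddGroup.norm_mk (S := M.toAddSubgroup) p)

variable {ι : Type*} [Fintype ι] [DecidableEq ι]

theorem ContinuousLinearMap.apply_eq_sum_comp_single (f : StrongDual ℝ (ι → E)) (v : ι → E) :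
    f v = ∑ i, f.comp (single ℝ (fun _ => E) i) (v i) := by
  conv_lhs => rw [← Finset.univ_sum_single v]
  simp [map_sum]

theorem ContinuousLinearMap.sum_norm_comp_single_le (f : StrongDual ℝ (ι → E)) :
    ∑ i, ‖f.comp (single ℝ (fun _ => E) i)‖ ≤ ‖f‖ := by
  refine le_of_forall_pos_le_add_mul (c := Fintype.card ι) fun δ hδ => ?_
  choose a hai hfa using fun i =>
    (f.comp (single ℝ (fun _ => E) i)).exists_norm_lt_one_lt_apply (sub_lt_self _ hδ)
  have ha : ‖a‖ ≤ 1 := (pi_norm_le_iff_of_nonneg zero_le_one).2 fun i => (hai i).le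
  calc ∑ i, ‖f.comp (single ℝ (fun _ => E) i)‖
      ≤ ∑ i, (f.comp (single ℝ (fun _ => E) i) (a i) + δ) :=
        Finset.sum_le_sum fun i _ => by linarith [hfa i]
    _ = f a + δ * Fintype.card ι := by
        rw [Finset.sum_add_distrib, ← f.apply_eq_sum_comp_single]; simp [mul_comm]
    _ ≤ ‖f‖ + δ * Fintype.card ι := by linarith [f.apply_le_of_norm_le ha]

end Functional

namespace Submodule

variable {X : Type*} [NormedAddCommGroup X] [NormedSpace ℝ X] (Y : Subspace ℝ X)

def IsMIdeal : Prop :=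
  ∃ P : StrongDual ℝ X →L[ℝ] StrongDual ℝ X,
    (∀ F, P (P F) = P F) ∧
    (Set.range (fun F => P F) = {F : StrongDual ℝ X | ∀ y ∈ Y, F y = 0}) ∧
    (∀ F, ‖F‖ = ‖P F‖ + ‖F - P F‖)

def HasThreeBallProperty : Prop :=
  ∀ y₁ y₂ y₃ : X, y₁ ∈ Y → y₂ ∈ Y → y₃ ∈ Y →
    ‖y₁‖ ≤ 1 → ‖y₂‖ ≤ 1 → ‖y₃‖ ≤ 1 →
    ∀ x : X, ‖x‖ ≤ 1 → ∀ ε > 0, ∃ y ∈ Y,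
      ‖x + y₁ - y‖ ≤ 1 + ε ∧ ‖x + y₂ - y‖ ≤ 1 + ε ∧ ‖x + y₃ - y‖ ≤ 1 + ε

theorem comp_subtypeL_eq_zero_iff (F : StrongDual ℝ X) :
    F.comp Y.subtypeL = 0 ↔ ∀ y ∈ Y, F y = 0 :=
  ⟨fun h y hy => congr($h ⟨y, hy⟩), fun h => ContinuousLinearMap.ext fun y => h y y.2⟩

noncomputable def normExtension (f : StrongDual ℝ Y) : StrongDual ℝ X :=
  (exists_extension_norm_eq Y f).choose

variable {Y}

@[simp]
theorem normExtension_apply (f : StrongDual ℝ Y) (y : Y) : Y.normExtension f y = f y :=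
  (exists_extension_norm_eq Y f).choose_spec.1 y

@[simp]
theorem normExtension_comp_subtypeL (f : StrongDual ℝ Y) :
    (Y.normExtension f).comp Y.subtypeL = f :=
  ContinuousLinearMap.ext (normExtension_apply f)

@[simp]
theorem norm_normExtension (f : StrongDual ℝ Y) : ‖Y.normExtension f‖ = ‖f‖ :=
  (exists_extension_norm_eq Y f).choose_spec.2

namespace IsMIdeal

theorem sum_apply_add_le_sum_norm (hY : Y.IsMIdeal) {ι : Type*} [Fintype ι]
    (G : ι → StrongDual ℝ X) (hG : ∀ z ∈ Y, (∑ i, G i) z = 0) {x : X} (hx : ‖x‖ ≤ 1)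
    {y : ι → X} (hyY : ∀ i, y i ∈ Y) (hy : ∀ i, ‖y i‖ ≤ 1) :
    ∑ i, G i (x + y i) ≤ ∑ i, ‖G i‖ := by
  obtain ⟨P, hPP, hran, hnorm⟩ := hY
  have hPY (F : StrongDual ℝ X) : ∀ z ∈ Y, P F z = 0 := by
    have : P F ∈ Set.range (fun F => P F) := Set.mem_range_self F
    rwa [hran] at this
  have hfix : P (∑ i, G i) = ∑ i, G i := by
    obtain ⟨F, hF⟩ : (∑ i, G i) ∈ Set.range (fun F => P F) := hran ▸ hG
    rw [← hF, hPP]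
  have hsplit (i : ι) :
      G i (x + y i) = P (G i) x + (G i - P (G i)) x + (G i - P (G i)) (y i) := by
    simp only [map_add, sub_apply, hPY (G i) (y i) (hyY i)]
    ring
  have hcancel : ∑ i, (G i - P (G i)) x = 0 := by
    rw [← sum_apply, Finset.sum_sub_distrib, ← map_sum, hfix, sub_self, zero_apply]
  calc ∑ i, G i (x + y i) = ∑ i, (P (G i) x + (G i - P (G i)) (y i)) := by
        simp only [hsplit, Finset.sum_add_distrib, hcancel, add_zero]
    _ ≤ ∑ i, (‖P (G i)‖ + ‖G i - P (G i)‖) := Finset.sum_le_sum fun i _ => add_le_add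
        (((P (G i)).apply_le_of_norm_le hx).trans_eq (mul_one _))
        (((G i - P (G i)).apply_le_of_norm_le (hy i)).trans_eq (mul_one _))
    _ = ∑ i, ‖G i‖ := by simp only [← hnorm]

theorem exists_forall_norm_add_sub_le (hY : Y.IsMIdeal) {ι : Type*} [Fintype ι] {x : X}
    (hx : ‖x‖ ≤ 1) {y : ι → X} (hyY : ∀ i, y i ∈ Y) (hy : ∀ i, ‖y i‖ ≤ 1) {ε : ℝ}
    (hε : 0 < ε) : ∃ z ∈ Y, ∀ i, ‖x + y i - z‖ ≤ 1 + ε := by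
  classical
  by_contra! hfar
  let D : Subspace ℝ (ι → X) := Y.map (LinearMap.pi fun _ => LinearMap.id)
  obtain ⟨f, hf, hfD, hfp⟩ := D.exists_dual_eq_infDist (fun i => x + y i)
  have hG (z : X) (hz : z ∈ Y) : (∑ i, f.comp (single ℝ (fun _ => X) i)) z = 0 := by
    rw [sum_apply, ← f.apply_eq_sum_comp_single (fun _ => z)]
    exact hfD _ (mem_map_of_mem hz)
  have hdist : 1 + ε ≤ infDist (fun i => x + y i) D := by
    rw [le_infDist ⟨0, D.zero_mem⟩]
    rintro _ ⟨z, hz, rfl⟩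
    obtain ⟨i, hi⟩ := hfar z hz
    rw [dist_eq_norm]
    exact hi.le.trans (norm_le_pi_norm (fun j => x + y j - z) i)
  have : 1 + ε ≤ 1 :=
    calc 1 + ε ≤ f (fun i => x + y i) := hfp ▸ hdist
      _ = ∑ i, f.comp (single ℝ (fun _ => X) i) (x + y i) := f.apply_eq_sum_comp_single _
      _ ≤ ∑ i, ‖f.comp (single ℝ (fun _ => X) i)‖ :=
        hY.sum_apply_add_le_sum_norm _ hG hx hyY hy
      _ ≤ ‖f‖ := f.sum_norm_comp_single_le
      _ ≤ 1 := hf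
  linarith

theorem hasThreeBallProperty (hY : Y.IsMIdeal) : Y.HasThreeBallProperty := by
  intro y₁ y₂ y₃ h₁ h₂ h₃ n₁ n₂ n₃ x hx ε hε
  obtain ⟨z, hz, h⟩ := hY.exists_forall_norm_add_sub_le hx (y := ![y₁, y₂, y₃])
    (by simp [Fin.forall_fin_succ, *]) (by simp [Fin.forall_fin_succ, *]) hε
  exact ⟨z, hz, h 0, h 1, h 2⟩

end IsMIdeal

namespace HasThreeBallProperty

theorem norm_add_add_add_le (hY : Y.HasThreeBallProperty) (G₁ G₂ G₃ : StrongDual ℝ X)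
    (hG : ∀ y ∈ Y, (G₁ + G₂ + G₃) y = 0) :
    ‖G₁ + G₂ + G₃‖ + (‖G₁.comp Y.subtypeL‖ + ‖G₂.comp Y.subtypeL‖ + ‖G₃.comp Y.subtypeL‖) ≤
      ‖G₁‖ + ‖G₂‖ + ‖G₃‖ := by
  refine le_of_forall_pos_le_add_mul (c := ‖G₁‖ + ‖G₂‖ + ‖G₃‖ + 4) fun δ hδ => ?_
  obtain ⟨x, hx, hGx⟩ := (G₁ + G₂ + G₃).exists_norm_lt_one_lt_apply (sub_lt_self _ hδ)
  obtain ⟨u₁, hu₁, hGu₁⟩ := (G₁.comp Y.subtypeL).exists_norm_lt_one_lt_apply (sub_lt_self _ hδ)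
  obtain ⟨u₂, hu₂, hGu₂⟩ := (G₂.comp Y.subtypeL).exists_norm_lt_one_lt_apply (sub_lt_self _ hδ)
  obtain ⟨u₃, hu₃, hGu₃⟩ := (G₃.comp Y.subtypeL).exists_norm_lt_one_lt_apply (sub_lt_self _ hδ)
  obtain ⟨y, hy, h₁, h₂, h₃⟩ :=
    hY u₁ u₂ u₃ u₁.2 u₂.2 u₃.2 hu₁.le hu₂.le hu₃.le x hx.le δ hδ
  have hsum : G₁ (x + u₁ - y) + G₂ (x + u₂ - y) + G₃ (x + u₃ - y) =
      (G₁ + G₂ + G₃) x + G₁ u₁ + G₂ u₂ + G₃ u₃ := by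
    have := hG y hy
    simp only [map_add, map_sub, add_apply] at this ⊢
    linarith
  simp only [comp_apply, subtypeL_apply] at hGu₁ hGu₂ hGu₃
  linarith [G₁.apply_le_of_norm_le h₁, G₂.apply_le_of_norm_le h₂, G₃.apply_le_of_norm_le h₃]

theorem norm_sub_normExtension_add_norm_le (hY : Y.HasThreeBallProperty) (F : StrongDual ℝ X) :
    ‖F - Y.normExtension (F.comp Y.subtypeL)‖ + ‖Y.normExtension (F.comp Y.subtypeL)‖ ≤ ‖F‖ := by
  have := hY.norm_add_add_add_le F (-Y.normExtension (F.comp Y.subtypeL)) 0 fun y hy => by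
    lift y to Y using hy
    simp
  simp only [neg_comp, zero_comp, normExtension_comp_subtypeL, opNorm_neg, opNorm_zero,
    norm_neg, norm_zero, norm_normExtension, add_zero, ← sub_eq_add_neg] at this ⊢
  linarith

theorem eq_normExtension (hY : Y.HasThreeBallProperty) {G : StrongDual ℝ X} {f : StrongDual ℝ Y}
    (hGf : G.comp Y.subtypeL = f) (hG : ‖G‖ = ‖f‖) : G = Y.normExtension f := by
  have := hY.norm_sub_normExtension_add_norm_le G
  rw [hGf, norm_normExtension, hG] at this
  exact sub_eq_zero.1 (norm_le_zero_iff.1 (by linarith))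

theorem normExtension_add (hY : Y.HasThreeBallProperty) (f g : StrongDual ℝ Y) :
    Y.normExtension (f + g) = Y.normExtension f + Y.normExtension g := by
  have := hY.norm_add_add_add_le (Y.normExtension f) (Y.normExtension g)
    (-Y.normExtension (f + g)) fun y hy => by
      lift y to Y using hy
      simp
  simp only [neg_comp, normExtension_comp_subtypeL, opNorm_neg, norm_neg, norm_normExtension,
    ← sub_eq_add_neg] at this
  exact (sub_eq_zero.1 (norm_le_zero_iff.1 (by linarith))).symm

theorem normExtension_smul (hY : Y.HasThreeBallProperty) (c : ℝ) (f : StrongDual ℝ Y) :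
    Y.normExtension (c • f) = c • Y.normExtension f :=
  -- instance search does not find this for the dual of a subspace
  have := NormedSpace.toNormSMulClass (𝕜 := ℝ) (E := StrongDual ℝ Y)
  (hY.eq_normExtension (by rw [smul_comp, normExtension_comp_subtypeL])
    (by rw [norm_smul, norm_smul, norm_normExtension])).symm

noncomputable def extensionCLM (hY : Y.HasThreeBallProperty) :
    StrongDual ℝ Y →L[ℝ] StrongDual ℝ X :=
  LinearMap.mkContinuous
    { toFun := Y.normExtension
      map_add' := hY.normExtension_add
      map_smul' := hY.normExtension_smul }
    1 fun f => by simp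

theorem isMIdeal (hY : Y.HasThreeBallProperty) : Y.IsMIdeal := by
  let P := ContinuousLinearMap.id ℝ _ - hY.extensionCLM.comp ((compL ℝ Y X ℝ).flip Y.subtypeL)
  have hP (F : StrongDual ℝ X) : P F = F - Y.normExtension (F.comp Y.subtypeL) := rfl
  have hPY (F : StrongDual ℝ X) : (P F).comp Y.subtypeL = 0 := by
    rw [hP, sub_comp, normExtension_comp_subtypeL, sub_self]
  have hfix (F : StrongDual ℝ X) (hF : F.comp Y.subtypeL = 0) : P F = F := by
    rw [hP, hF, show Y.normExtension 0 = 0 from map_zero hY.extensionCLM, sub_zero]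
  refine ⟨P, fun F => hfix _ (hPY F), Set.ext fun F => ⟨?_, fun hF => ⟨F, hfix F ?_⟩⟩, fun F => ?_⟩
  · rintro ⟨G, rfl⟩
    exact (comp_subtypeL_eq_zero_iff Y _).1 (hPY G)
  · exact (comp_subtypeL_eq_zero_iff Y F).2 hF
  · refine le_antisymm ((norm_add_le _ _).trans_eq' (by rw [add_sub_cancel])) ?_
    rw [hP, sub_sub_cancel]
    exact hY.norm_sub_normExtension_add_norm_le F

end HasThreeBallProperty

end Submodule

theorem m_ideal_iff_three_ball_property_general
    {X : Type*} [NormedAddCommGroup X] [NormedSpace ℝ X]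
    (Y : Subspace ℝ X) :
    (∃ P : StrongDual ℝ X →L[ℝ] StrongDual ℝ X,
        (∀ F, P (P F) = P F) ∧
        (Set.range (fun F => P F) = {F : StrongDual ℝ X | ∀ y ∈ Y, F y = 0}) ∧
        (∀ F, ‖F‖ = ‖P F‖ + ‖F - P F‖)) ↔
    (∀ y₁ y₂ y₃ : X, y₁ ∈ Y → y₂ ∈ Y → y₃ ∈ Y →
      ‖y₁‖ ≤ 1 → ‖y₂‖ ≤ 1 → ‖y₃‖ ≤ 1 →
      ∀ x : X, ‖x‖ ≤ 1 → ∀ ε > 0, ∃ y ∈ Y,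
        ‖x + y₁ - y‖ ≤ 1 + ε ∧ ‖x + y₂ - y‖ ≤ 1 + ε ∧ ‖x + y₃ - y‖ ≤ 1 + ε) :=
  ⟨Submodule.IsMIdeal.hasThreeBallProperty, Submodule.HasThreeBallProperty.isMIdeal⟩

/-- A closed subspace `Y` of a real Banach space `X` is an
M-ideal in `X` if and only if `Y` has the 3-ball property. -/
theorem m_ideal_iff_three_ball_property
    {X : Type*} [NormedAddCommGroup X] [NormedSpace ℝ X] [CompleteSpace X]
    (Y : Subspace ℝ X) (hYc : IsClosed (Y : Set X)) :
    (∃ P : StrongDual ℝ X →L[ℝ] StrongDual ℝ X,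
        (∀ F, P (P F) = P F) ∧
        (Set.range (fun F => P F) = {F : StrongDual ℝ X | ∀ y ∈ Y, F y = 0}) ∧
        (∀ F, ‖F‖ = ‖P F‖ + ‖F - P F‖)) ↔
    (∀ y₁ y₂ y₃ : X, y₁ ∈ Y → y₂ ∈ Y → y₃ ∈ Y →
      ‖y₁‖ ≤ 1 → ‖y₂‖ ≤ 1 → ‖y₃‖ ≤ 1 →
      ∀ x : X, ‖x‖ ≤ 1 → ∀ ε > 0, ∃ y ∈ Y,
        ‖x + y₁ - y‖ ≤ 1 + ε ∧ ‖x + y₂ - y‖ ≤ 1 + ε ∧ ‖x + y₃ - y‖ ≤ 1 + ε) :=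
  m_ideal_iff_three_ball_property_general Y
end

section
/- Let φ be an Orlicz function and let d_φ = sup{u > 0 : φ(s) = k·s for some k ≥ 0 and for all s ∈ [0, u)}. For every closed and bounded interval J = [a, b] with d_φ < a ≤ b < ∞, there exists a constant σ ∈ (0, 1) such that 2·φ(u/2)/φ(u) ≤ σ for all u ∈ J. -/
/-!
Convexity and `φ 0 = 0` give `2 φ(u/2) ≤ φ u`. If equality held at some `u`, the graph of `φ`
would meet the chord from the origin to `(u, φ u)` at the interior point `u/2`, and a convex
function touching a chord at an interior point coincides with it; so `φ` would be linear on
`[0, u]`, i.e. `u ≤ d_φ`. Hence `u ↦ 2 φ(u/2) / φ u` is `< 1` on `[a, b]`, and being continuous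
there (convex functions are continuous on the interior of their domain) it attains its maximum.
-/

open Set

/-- The constant `d_φ`, as an element of `[0, ∞]`. -/
noncomputable def linearityThreshold (φ : ℝ → ℝ) : ENNReal :=
  sSup {p : ENNReal | ∃ u : ℝ, 0 < u ∧ p = ENNReal.ofReal u ∧
    ∃ k : ℝ, 0 ≤ k ∧ ∀ s : ℝ, 0 ≤ s → s < u → φ s = k * s}

lemma ofReal_le_linearityThreshold {φ : ℝ → ℝ} {u k : ℝ} (hu : 0 < u) (hk : 0 ≤ k)
    (hlin : ∀ s : ℝ, 0 ≤ s → s < u → φ s = k * s) :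
    ENNReal.ofReal u ≤ linearityThreshold φ :=
  le_sSup ⟨u, hu, rfl, k, hk, hlin⟩

lemma ConvexOn.eq_mul_of_mul_le {φ : ℝ → ℝ} (hconv : ConvexOn ℝ (Ici 0) φ) (h0 : φ 0 = 0)
    {k t u : ℝ} (ht : 0 < t) (htu : t < u) (hφt : k * t ≤ φ t) (hφu : φ u = k * u)
    {s : ℝ} (hs : 0 ≤ s) (hsu : s ≤ u) : φ s = k * s := by
  apply le_antisymm
  · rcases hs.eq_or_lt with rfl | hs
    · simp [h0]
    rcases hsu.eq_or_lt with rfl | hsu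
    · exact hφu.le
    have := hconv.secant_mono_aux1 self_mem_Ici (mem_Ici.mpr (hs.trans hsu).le) hs hsu
    rw [h0, hφu] at this
    nlinarith
  · rcases lt_trichotomy s t with hst | rfl | hts
    · have := hconv.secant_mono_aux1 (mem_Ici.mpr hs) (mem_Ici.mpr (ht.trans htu).le) hst htu
      rw [hφu] at this
      nlinarith
    · exact hφt
    · have := hconv.secant_mono_aux1 self_mem_Ici (mem_Ici.mpr hs) ht hts
      rw [h0] at this
      nlinarith

lemma two_mul_apply_half_lt_of_linearityThreshold_lt {φ : ℝ → ℝ}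
    (hconv : ConvexOn ℝ (Ici 0) φ) (h0 : φ 0 = 0) (hnonneg : ∀ u : ℝ, 0 ≤ u → 0 ≤ φ u)
    {u : ℝ} (hu : linearityThreshold φ < ENNReal.ofReal u) : 2 * φ (u / 2) < φ u := by
  have hu0 : 0 < u := ENNReal.ofReal_pos.mp (lt_of_le_of_lt zero_le hu)
  by_contra! hle
  have hlin : ∀ s : ℝ, 0 ≤ s → s < u → φ s = φ u / u * s := fun s hs hsu =>
    hconv.eq_mul_of_mul_le h0 (half_pos hu0) (half_lt_self hu0)
      (by field_simp; linarith) (by field_simp) hs hsu.le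
  exact hu.not_ge <| ofReal_le_linearityThreshold hu0 (div_nonneg (hnonneg u hu0.le) hu0.le) hlin

lemma IsCompact.exists_lt_forall_le_of_forall_lt {K : Set ℝ} {f : ℝ → ℝ} {c : ℝ}
    (hK : IsCompact K) (hf : ContinuousOn f K) (hlt : ∀ x ∈ K, f x < c) :
    ∃ σ < c, ∀ x ∈ K, f x ≤ σ := by
  rcases K.eq_empty_or_nonempty with rfl | hne
  · exact ⟨c - 1, by linarith, by simp⟩
  obtain ⟨x₀, hx₀, hmax⟩ := hK.exists_isMaxOn hne hf
  exact ⟨f x₀, hlt x₀ hx₀, hmax⟩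

theorem orlicz_sigma_on_interval_general
    (φ : ℝ → ℝ) (hconv : ConvexOn ℝ (Set.Ici 0) φ) (h0 : φ 0 = 0)
    (hnonneg : ∀ u : ℝ, 0 ≤ u → 0 ≤ φ u)
    (a b : ℝ)
    (hd : sSup {p : ENNReal | ∃ u : ℝ, 0 < u ∧ p = ENNReal.ofReal u ∧
          ∃ k : ℝ, 0 ≤ k ∧ ∀ s : ℝ, 0 ≤ s → s < u → φ s = k * s}
        < ENNReal.ofReal a) :
    ∃ σ : ℝ, 0 < σ ∧ σ < 1 ∧ ∀ u : ℝ, a ≤ u → u ≤ b → 2 * φ (u / 2) / φ u ≤ σ := by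
  have hkey : ∀ u, a ≤ u → 2 * φ (u / 2) < φ u := fun u hu =>
    two_mul_apply_half_lt_of_linearityThreshold_lt hconv h0 hnonneg
      (hd.trans_le (ENNReal.ofReal_le_ofReal hu))
  have ha : 0 < a := ENNReal.ofReal_pos.mp (lt_of_le_of_lt zero_le hd)
  have hpos : ∀ u, a ≤ u → 0 < φ u := fun u hu =>
    (mul_nonneg zero_le_two (hnonneg _ (by linarith))).trans_lt (hkey u hu)
  have hcont : ContinuousOn φ (Ioi 0) := by
    simpa only [interior_Ici] using hconv.continuousOn_interior
  have hIcc : Icc a b ⊆ Ioi 0 := fun u hu => ha.trans_le hu.1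
  have hhalf : ContinuousOn (fun u => φ (u / 2)) (Icc a b) :=
    hcont.comp (continuousOn_id.div_const 2) fun u hu => mem_Ioi.mpr (half_pos (hIcc hu))
  have hratio : ContinuousOn (fun u => 2 * φ (u / 2) / φ u) (Icc a b) :=
    (continuousOn_const.mul hhalf).div (hcont.mono hIcc) fun u hu => (hpos u hu.1).ne'
  obtain ⟨σ, hσ, hbound⟩ := isCompact_Icc.exists_lt_forall_le_of_forall_lt hratio
    fun u hu => (div_lt_one (hpos u hu.1)).mpr (hkey u hu.1)
  exact ⟨max σ (1 / 2), by positivity, max_lt hσ (by norm_num),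
    fun u hau hub => (hbound u ⟨hau, hub⟩).trans (le_max_left _ _)⟩

/-- For an Orlicz function `φ` and a closed bounded interval
`J = [a, b] ⊆ (d_φ, ∞)`, there is `σ ∈ (0,1)` with `2·φ(u/2)/φ(u) ≤ σ`
for all `u ∈ J`. The constant `d_φ ∈ [0, ∞]` is the supremum of those `u > 0`
such that `φ` is linear on `[0, u)`. -/
theorem orlicz_sigma_on_interval
    (φ : ℝ → ℝ) (hconv : ConvexOn ℝ (Set.Ici 0) φ) (h0 : φ 0 = 0)
    (hnonneg : ∀ u : ℝ, 0 ≤ u → 0 ≤ φ u) (hnz : ∃ u : ℝ, 0 ≤ u ∧ φ u ≠ 0)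
    (a b : ℝ) (hab : a ≤ b)
    (hd : sSup {p : ENNReal | ∃ u : ℝ, 0 < u ∧ p = ENNReal.ofReal u ∧
          ∃ k : ℝ, 0 ≤ k ∧ ∀ s : ℝ, 0 ≤ s → s < u → φ s = k * s}
        < ENNReal.ofReal a) :
    ∃ σ : ℝ, 0 < σ ∧ σ < 1 ∧ ∀ u : ℝ, a ≤ u → u ≤ b → 2 * φ (u / 2) / φ u ≤ σ :=
  orlicz_sigma_on_interval_general φ hconv h0 hnonneg a b hd
end

section
/- Let X be a real Banach space and let x ∈ S_X be a locally uniformly nonsquare point (i.e., there exists δ > 0 such that min{‖x + y‖, ‖x − y‖} ≤ 2 − δ for all y ∈ S_X). Then there exists ε > 0 such that the weak*-slice S(x, ε) = {x* ∈ B_{X*} : x*(x) > 1 − ε} of the dual unit ball B_{X*} has diameter strictly less than 2. -/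
/-!
If `f` and `g` both lie in the slice `S(x, ε)` and `y` is a unit vector, one of `‖x + y‖` and
`‖x - y‖` is at most `2 - δ`. In the first case `f y ≤ ‖x + y‖ - f x < 1 - δ + ε`, in the
second `-g y ≤ ‖x - y‖ - g x < 1 - δ + ε`; the other term is at most `1` in either case, so
`‖f - g‖ ≤ 2 - δ + ε`, which is less than `2` once `ε < δ`.
-/

namespace StrongDual

variable {X : Type*} [NormedAddCommGroup X] [NormedSpace ℝ X]

/-- The weak*-slice `S(x, ε)` of the dual unit ball. -/
def slice (x : X) (ε : ℝ) : Set (StrongDual ℝ X) :=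
  {f | ‖f‖ ≤ 1 ∧ f x > 1 - ε}

theorem apply_le_norm_of_norm_le_one {f : StrongDual ℝ X} (hf : ‖f‖ ≤ 1) (z : X) :
    f z ≤ ‖z‖ :=
  (le_abs_self _).trans (by simpa using f.le_of_opNorm_le hf z)

theorem sub_apply_le_of_mem_slice {x y : X} {ε δ : ℝ} {f g : StrongDual ℝ X}
    (hf : f ∈ slice x ε) (hg : g ∈ slice x ε) (hy : ‖y‖ ≤ 1)
    (hxy : min ‖x + y‖ ‖x - y‖ ≤ 2 - δ) :
    f y - g y ≤ 2 - δ + ε := by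
  obtain ⟨hf, hfx⟩ := hf
  obtain ⟨hg, hgx⟩ := hg
  have hfy := apply_le_norm_of_norm_le_one hf y
  have hgy := apply_le_norm_of_norm_le_one hg (-y)
  rw [map_neg, norm_neg] at hgy
  rcases min_le_iff.mp hxy with h | h
  · have hfxy := apply_le_norm_of_norm_le_one hf (x + y)
    rw [map_add] at hfxy
    linarith
  · have hgxy := apply_le_norm_of_norm_le_one hg (x - y)
    rw [map_sub] at hgxy
    linarith

theorem diam_slice_le {x : X} {ε δ : ℝ}
    (hmin : ∀ y : X, ‖y‖ = 1 → min ‖x + y‖ ‖x - y‖ ≤ 2 - δ) (hC : 0 ≤ 2 - δ + ε) :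
    Metric.diam (slice x ε) ≤ 2 - δ + ε := by
  refine Metric.diam_le_of_forall_dist_le hC fun f hf g hg => ?_
  rw [dist_eq_norm]
  refine ContinuousLinearMap.opNorm_le_of_unit_norm hC fun y hy => ?_
  have hfg := sub_apply_le_of_mem_slice hf hg hy.le (hmin y hy)
  have hgf := sub_apply_le_of_mem_slice hg hf hy.le (hmin y hy)
  rw [sub_apply, Real.norm_eq_abs, abs_le]
  constructor <;> linarith

end StrongDual

theorem lunsq_point_small_dual_slice_general
    {X : Type*} [NormedAddCommGroup X] [NormedSpace ℝ X]
    (x : X)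
    (hlunsq : ∃ δ > 0, ∀ y : X, ‖y‖ = 1 → min ‖x + y‖ ‖x - y‖ ≤ 2 - δ) :
    ∃ ε > 0,
      Metric.diam {f : StrongDual ℝ X | ‖f‖ ≤ 1 ∧ f x > 1 - ε} < 2 := by
  obtain ⟨δ, hδ, hmin⟩ := hlunsq
  set δ' := min δ 2
  have hδ' : 0 < δ' := lt_min hδ two_pos
  have hmin' : ∀ y : X, ‖y‖ = 1 → min ‖x + y‖ ‖x - y‖ ≤ 2 - δ' := fun y hy =>
    (hmin y hy).trans (by linarith [min_le_left δ 2])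
  refine ⟨δ' / 2, half_pos hδ', ?_⟩
  have hδ'2 : δ' ≤ 2 := min_le_right δ 2
  calc Metric.diam (StrongDual.slice x (δ' / 2)) ≤ 2 - δ' + δ' / 2 :=
        StrongDual.diam_slice_le hmin' (by linarith)
    _ < 2 := by linarith

/-- If `x ∈ S_X` is a locally uniformly nonsquare point of a
real Banach space `X`, then some weak*-slice `S(x, ε)` of the dual unit ball
has diameter strictly less than 2. -/
theorem lunsq_point_small_dual_slice
    {X : Type*} [NormedAddCommGroup X] [NormedSpace ℝ X] [CompleteSpace X]
    (x : X) (hx : ‖x‖ = 1)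
    (hlunsq : ∃ δ > 0, ∀ y : X, ‖y‖ = 1 → min ‖x + y‖ ‖x - y‖ ≤ 2 - δ) :
    ∃ ε > 0,
      Metric.diam {f : StrongDual ℝ X | ‖f‖ ≤ 1 ∧ f x > 1 - ε} < 2 :=
  lunsq_point_small_dual_slice_general x hlunsq
end

section
/- Let X be a real Banach space whose unit sphere S_X contains a locally uniformly nonsquare point (a point x ∈ S_X for which there exists δ > 0 such that min{‖x + y‖, ‖x − y‖} ≤ 2 − δ for all y ∈ S_X). Then the dual space X* does not have the local diameter two property: there exist Φ ∈ S_{X**} and ε > 0 such that the slice {x* ∈ B_{X*} : Φ(x*) > 1 − ε} of B_{X*} has diameter strictly less than 2. -/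
/-! A functional `f` in the slice of `B_{X*}` determined by the unit vector `x` nearly norms `x`,
so for every unit `y` we get `f y ≤ ‖x + y‖ - f x` and `-g y ≤ ‖x - y‖ - g x` for two such
functionals `f`, `g`. Adding, `(f - g) y ≤ ‖x + y‖ + ‖x - y‖ - 2 + 2ε`, and the nonsquareness of `x`
bounds `‖x + y‖ + ‖x - y‖` by `4 - δ`. Hence the slice of `B_{X*}` cut out by the image of `x` in
`X**` with `ε = δ / 4` has diameter at most `2 - δ / 2`. -/

section

variable {X : Type*} [NormedAddCommGroup X]

theorem norm_add_add_norm_sub_le_min_add (x y : X) :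
    ‖x + y‖ + ‖x - y‖ ≤ min ‖x + y‖ ‖x - y‖ + (‖x‖ + ‖y‖) := by
  rw [← min_add_max ‖x + y‖ ‖x - y‖]
  gcongr
  exact max_le (norm_add_le x y) (norm_sub_le x y)

variable [NormedSpace ℝ X]

theorem StrongDual.apply_le_of_norm_le_one {f : StrongDual ℝ X} (hf : ‖f‖ ≤ 1) (x : X) :
    f x ≤ ‖x‖ :=
  (le_abs_self _).trans ((f.le_of_opNorm_le hf x).trans_eq (one_mul _))

theorem StrongDual.norm_le_of_forall_apply_le (φ : StrongDual ℝ X) {C : ℝ} (hC : 0 ≤ C)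
    (h : ∀ y, ‖y‖ = 1 → φ y ≤ C) : ‖φ‖ ≤ C := by
  refine φ.opNorm_le_of_unit_norm hC fun y hy => abs_le.mpr ⟨?_, h y hy⟩
  have := h (-y) (by rwa [norm_neg])
  rw [map_neg] at this
  linarith

theorem StrongDual.sub_apply_le_of_norm_le_one {f g : StrongDual ℝ X} (hf : ‖f‖ ≤ 1)
    (hg : ‖g‖ ≤ 1) (x y : X) : f y - g y ≤ ‖x + y‖ + ‖x - y‖ - (f x + g x) := by
  have hfy := StrongDual.apply_le_of_norm_le_one hf (x + y)
  have hgy := StrongDual.apply_le_of_norm_le_one hg (x - y)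
  rw [map_add] at hfy
  rw [map_sub] at hgy
  linarith

theorem StrongDual.dist_le_of_mem_slice {x : X} (hx : ‖x‖ = 1) {δ ε : ℝ}
    (hδ : ∀ y : X, ‖y‖ = 1 → min ‖x + y‖ ‖x - y‖ ≤ 2 - δ) (hC : 0 ≤ 2 - δ + 2 * ε)
    {f g : StrongDual ℝ X} (hf : ‖f‖ ≤ 1 ∧ 1 - ε < f x) (hg : ‖g‖ ≤ 1 ∧ 1 - ε < g x) :
    dist f g ≤ 2 - δ + 2 * ε := by
  rw [dist_eq_norm]
  refine (f - g).norm_le_of_forall_apply_le hC fun y hy => ?_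
  have hfg := StrongDual.sub_apply_le_of_norm_le_one hf.1 hg.1 x y
  have hsum := norm_add_add_norm_sub_le_min_add x y
  rw [hx, hy] at hsum
  rw [sub_apply]
  linarith [hδ y hy, hf.2, hg.2]

end

theorem lunsq_point_dual_fails_ld2p_general
    {X : Type*} [NormedAddCommGroup X] [NormedSpace ℝ X]
    (h : ∃ x : X, ‖x‖ = 1 ∧
      ∃ δ > 0, ∀ y : X, ‖y‖ = 1 → min ‖x + y‖ ‖x - y‖ ≤ 2 - δ) :
    ∃ Φ : StrongDual ℝ (StrongDual ℝ X), ‖Φ‖ = 1 ∧ ∃ ε > 0,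
      Metric.diam {f : StrongDual ℝ X | ‖f‖ ≤ 1 ∧ Φ f > 1 - ε} < 2 := by
  obtain ⟨x, hx, δ, hδ_pos, hδ⟩ := h
  have hδ_le_two : δ ≤ 2 := by
    simpa [min_eq_right (norm_nonneg (x + x))] using hδ x hx
  refine ⟨NormedSpace.inclusionInDoubleDualLi ℝ x, ?_, δ / 4, by positivity, ?_⟩
  · rwa [LinearIsometry.norm_map]
  have hC : 0 ≤ 2 - δ + 2 * (δ / 4) := by linarith
  refine (Metric.diam_le_of_forall_dist_le hC fun f hf g hg => ?_).trans_lt (by linarith)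
  exact StrongDual.dist_le_of_mem_slice hx hδ hC hf hg

/-- If the unit sphere of a real Banach space `X` contains a
locally uniformly nonsquare point, then the dual `X*` fails the local diameter
two property: some slice of `B_{X*}` (given by a norm-one functional in the
bidual) has diameter strictly less than 2. -/
theorem lunsq_point_dual_fails_ld2p
    {X : Type*} [NormedAddCommGroup X] [NormedSpace ℝ X] [CompleteSpace X]
    (h : ∃ x : X, ‖x‖ = 1 ∧
      ∃ δ > 0, ∀ y : X, ‖y‖ = 1 → min ‖x + y‖ ‖x - y‖ ≤ 2 - δ) :
    ∃ Φ : StrongDual ℝ (StrongDual ℝ X), ‖Φ‖ = 1 ∧ ∃ ε > 0,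
      Metric.diam {f : StrongDual ℝ X | ‖f‖ ≤ 1 ∧ Φ f > 1 - ε} < 2 :=
  lunsq_point_dual_fails_ld2p_general h
end
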